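/- Fix integers n ≥ 2 and r−1 ≥ 1, and a partition μ = (μ_1 ≥ … ≥ μ_n ≥ 0). Let ℤ^n_μ = {λ ∈ ℤ^n : λ^{quot} = μ}. For λ ∈ ℤ^n with index ordering i_1,…,i_n and quotient data p_1,…,p_n, define λ' ∈ ℤ^n by λ'_{i_m} = λ_{i_m} − σ(λ)_{i_m}·(r−1)·(p_m + p_{m+1} + ⋯ + p_n) for 1 ≤ m ≤ n. Then ρ(λ') = ρ(λ), σ(λ') = σ(λ), λ'_i ≡ λ_i (mod r−1) for all i, the (r−1)-quotient of λ' is (0, …, 0), and the map λ ↦ λ' is a bijection from ℤ^n_μ onto ℤ^n_{(0,…,0)}. -/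

import Mathlib

open scoped Classical

namespace CCnDAHA

variable {n : ℕ}




/-- σ(λ)_i = +1 if λ_i ≥ 0, −1 otherwise. -/
def sgn (lam : Fin n → ℤ) (i : Fin n) : ℤ := if 0 ≤ lam i then 1 else -1

/-- `Prec lam i j` : index `i` strictly precedes `j` in the ordering i_1,…,i_n. -/
def Prec (lam : Fin n → ℤ) (i j : Fin n) : Prop :=
  |lam j| < |lam i| ∨
    (|lam i| = |lam j| ∧
      ((0 ≤ lam i ∧ lam j < 0) ∨
       (0 ≤ lam i ∧ 0 ≤ lam j ∧ i < j) ∨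
       (lam i < 0 ∧ lam j < 0 ∧ j < i)))

/-- 0-based position of index `i` in the ordering i_1,…,i_n (position m−1). -/
noncomputable def posOf (lam : Fin n → ℤ) (i : Fin n) : ℕ :=
  (Finset.univ.filter (fun j => Prec lam j i)).card

/-- ρ(λ)_i = σ(λ)_i · (n − m) where i = i_m. -/
noncomputable def rho (lam : Fin n → ℤ) (i : Fin n) : ℤ :=
  sgn lam i * ((n : ℤ) - 1 - (posOf lam i : ℤ))

/-- (a,b)-neighborhood. -/
noncomputable def IsNbhd (a b : ℤ) (lam : Fin n → ℤ) (i j : Fin n) : Prop :=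
  |rho lam i| - |rho lam j| = a - 1 ∧
  |lam i| - |lam j| ≤ b ∧
  (|lam i| - |lam j| = b →
    ((0 ≤ lam i ∧ 0 ≤ lam j ∧ j < i) ∨
     (lam i < 0 ∧ lam j < 0 ∧ i < j) ∨
     (lam i < 0 ∧ 0 ≤ lam j)))

/-- (a,b)-admissible: no (a,b)-neighborhood. -/
noncomputable def Admissible (a b : ℤ) (lam : Fin n → ℤ) : Prop :=
  ∀ i j, ¬ IsNbhd a b lam i j

/-- number of (a,b)-neighborhoods. -/
noncomputable def nbhdCount (a b : ℤ) (lam : Fin n → ℤ) : ℕ :=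
  ((Finset.univ : Finset (Fin n × Fin n)).filter (fun p => IsNbhd a b lam p.1 p.2)).card

/-- dot action of the affine simple reflection s_i (0 ≤ i ≤ n, 1-based paper indexing). -/
noncomputable def dotAct (i : ℕ) (lam : Fin n → ℤ) : Fin n → ℤ := fun j =>
  if i = 0 then (if (j : ℕ) = 0 then -1 - lam j else lam j)
  else if i = n then (if (j : ℕ) + 1 = n then -lam j else lam j)
  else if h1 : (j : ℕ) + 1 = i ∧ i < n then lam ⟨(j : ℕ) + 1, by omega⟩
  else if h2 : (j : ℕ) = i then lam ⟨(j : ℕ) - 1, by have := j.isLt; omega⟩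
  else lam j

/-- pairing ⟨λ, α_i⟩, for 0 ≤ i ≤ n. -/
noncomputable def pairing (i : ℕ) (lam : Fin n → ℤ) : ℤ :=
  if hn : n = 0 then 0
  else if i = 0 then -2 * lam ⟨0, by omega⟩
  else if i = n then 2 * lam ⟨n - 1, by omega⟩
  else lam ⟨(i - 1) % n, Nat.mod_lt _ (by omega)⟩ - lam ⟨i % n, Nat.mod_lt _ (by omega)⟩

/-- partial sum λ_1 + ⋯ + λ_j. -/
def psum (lam : Fin n → ℤ) (j : Fin n) : ℤ :=
  ∑ i ∈ Finset.univ.filter (fun i => i ≤ j), lam i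

/-- dominance order: μ ≤ λ. -/
def DomLE (mu lam : Fin n → ℤ) : Prop := ∀ j, psum mu j ≤ psum lam j

/-- λ⁺ : the weakly decreasing rearrangement of (|λ_1|,…,|λ_n|). -/
noncomputable def lamPlus (lam : Fin n → ℤ) : Fin n → ℤ := fun j =>
  ((Multiset.sort (Multiset.map (fun i => |lam i|) Finset.univ.val) (· ≤ ·)).reverse).getD (j : ℕ) 0

/-- λ ≻ μ. -/
noncomputable def SuccOrd (lam mu : Fin n → ℤ) : Prop :=
  (DomLE (lamPlus mu) (lamPlus lam) ∧ lamPlus lam ≠ lamPlus mu) ∨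
  (lamPlus lam = lamPlus mu ∧ DomLE mu lam ∧ lam ≠ mu)

/-- |λ_{i_m}|, with the sentinel value 0 at m = n+1. -/
noncomputable def absAt (lam : Fin n → ℤ) (m : ℕ) : ℤ :=
  if m = n + 1 then 0
  else ∑ i ∈ Finset.univ.filter (fun i => posOf lam i + 1 = m), |lam i|

/-- σ(λ)_{i_m}, with sentinel value +1 at m = n+1. -/
noncomputable def sgAt (lam : Fin n → ℤ) (m : ℕ) : ℤ :=
  if m = n + 1 then 1
  else ∑ i ∈ Finset.univ.filter (fun i => posOf lam i + 1 = m), sgn lam i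

/-- the (1-based) value of the index i_m, with sentinel value n+1 at m = n+1. -/
noncomputable def ixAt (lam : Fin n → ℤ) (m : ℕ) : ℕ :=
  if m = n + 1 then n + 1
  else ∑ i ∈ Finset.univ.filter (fun i => posOf lam i + 1 = m), ((i : ℕ) + 1)

/-- β_m ∈ {0,1}. -/
noncomputable def betaAt (lam : Fin n → ℤ) (m : ℕ) : ℤ :=
  if (sgAt lam m = 1 ∧ sgAt lam (m + 1) = 1 ∧ ixAt lam (m + 1) < ixAt lam m) ∨
     (sgAt lam m = -1 ∧ sgAt lam (m + 1) = -1 ∧ ixAt lam m < ixAt lam (m + 1)) ∨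
     (sgAt lam m = -1 ∧ sgAt lam (m + 1) = 1)
  then 1 else 0

/-- p_m = ⌊(|λ_{i_m}| − |λ_{i_{m+1}}| − β_m)/b⌋ (b plays the role of r−1). -/
noncomputable def pAt (b : ℤ) (lam : Fin n → ℤ) (m : ℕ) : ℤ :=
  Int.fdiv (absAt lam m - absAt lam (m + 1) - betaAt lam m) b

/-- the b-quotient λ^{quot} (b plays the role of r−1): j-th entry is p_j + ⋯ + p_n
(1-based j = (j:Fin n) + 1). -/
noncomputable def quotOf (b : ℤ) (lam : Fin n → ℤ) : Fin n → ℤ := fun j =>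
  ∑ m ∈ Finset.Icc ((j : ℕ) + 1) n, pAt b lam m

/-- fundamental weight ϖ_j (1-based j = (j : Fin n)+1): first j entries 1, rest 0. -/
def varpi (j : Fin n) : Fin n → ℤ := fun i => if i ≤ j then 1 else 0



/-- the map λ ↦ λ' of STATEMENT 19: λ'_{i_m} = λ_{i_m} − σ(λ)_{i_m}(r−1)(p_m + ⋯ + p_n). -/
noncomputable def Tmap (r : ℤ) (lam : Fin n → ℤ) : Fin n → ℤ := fun i =>
  lam i - sgn lam i * (r - 1) * ∑ m ∈ Finset.Icc (posOf lam i + 1) n, pAt (r - 1) lam m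

/-!
Write `b = r - 1`. For `d : Fin n → ℤ` indexed by positions, `shift b d λ` moves the entry at
position `m` of the ordering `i_1, …, i_n` away from zero by `b · d_m`, so the gap
`|λ_{i_m}| - |λ_{i_{m+1}}|` changes by `b (d_m - d_{m+1})`. When `λ^{quot} + d` is still a
partition, every new gap is at least `β_m`. That is exactly what the tie-breaking rule needs to
keep the ordering, and, since `β_m = 1` whenever a negative entry is followed by a nonnegative
one or comes last, it keeps every negative entry negative. Then `p_m` changes by `d_m - d_{m+1}`, so the
quotient becomes `λ^{quot} + d`. The map of the theorem is the shift by `d = -λ^{quot}`;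
shifts that preserve the ordering compose additively, so the shift by `μ` inverts it on
`ℤ^n_{(0,…,0)}`.
-/

open Finset

section Ordering

def tieKey (lam : Fin n → ℤ) (i : Fin n) : ℤ :=
  if 0 ≤ lam i then (i : ℕ) else 2 * n - 1 - (i : ℕ)

def key (lam : Fin n → ℤ) (i : Fin n) : ℤ ×ₗ ℤ := toLex (-|lam i|, tieKey lam i)

variable {lam lam' : Fin n → ℤ}

lemma tieKey_injective (lam : Fin n → ℤ) : Function.Injective (tieKey lam) := by
  intro i j h
  have := i.isLt; have := j.isLt
  unfold tieKey at h
  exact Fin.ext (by split_ifs at h <;> omega)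

lemma tieKey_congr {i : Fin n} (h : sgn lam' i = sgn lam i) : tieKey lam' i = tieKey lam i := by
  unfold sgn at h; unfold tieKey
  split_ifs at h ⊢ <;> omega

lemma key_lt_iff {i j : Fin n} : key lam i < key lam j ↔
    |lam j| < |lam i| ∨ |lam i| = |lam j| ∧ tieKey lam i < tieKey lam j := by
  simp only [key, Prod.Lex.toLex_lt_toLex, neg_lt_neg_iff, neg_inj]

lemma prec_iff_key_lt {i j : Fin n} : Prec lam i j ↔ key lam i < key lam j := by
  have := i.isLt; have := j.isLt
  rw [key_lt_iff, Prec, tieKey, tieKey, Fin.lt_def, Fin.lt_def]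
  split_ifs <;> omega

lemma posOf_eq_card (lam : Fin n → ℤ) (i : Fin n) :
    posOf lam i = #{j | key lam j < key lam i} := by
  simp only [posOf, prec_iff_key_lt]

lemma posOf_lt_posOf_of_key_lt {i j : Fin n} (h : key lam i < key lam j) :
    posOf lam i < posOf lam j := by
  rw [posOf_eq_card, posOf_eq_card]
  refine card_lt_card ((ssubset_iff_of_subset fun k hk => ?_).2 ⟨i, ?_, ?_⟩)
  · simp only [mem_filter, mem_univ, true_and] at hk ⊢
    exact hk.trans h
  · simpa using h
  · simp

lemma key_lt_iff_posOf_lt {i j : Fin n} : key lam i < key lam j ↔ posOf lam i < posOf lam j := by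
  refine ⟨posOf_lt_posOf_of_key_lt, fun h => ?_⟩
  rcases lt_trichotomy (key lam i) (key lam j) with hij | hij | hij
  · exact hij
  · cases tieKey_injective lam (congrArg (fun k => (ofLex k).2) hij)
    exact absurd h (lt_irrefl _)
  · exact absurd (posOf_lt_posOf_of_key_lt hij) h.asymm

lemma posOf_lt (lam : Fin n → ℤ) (i : Fin n) : posOf lam i < n := by
  rw [posOf_eq_card]
  simpa using card_lt_card (filter_ssubset (p := fun j => key lam j < key lam i).2
    ⟨i, mem_univ i, lt_irrefl _⟩)

lemma posOf_injective (lam : Fin n → ℤ) : Function.Injective (posOf lam) := by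
  intro i j h
  rcases lt_trichotomy (key lam i) (key lam j) with hij | hij | hij
  · exact absurd (key_lt_iff_posOf_lt.1 hij) h.not_lt
  · exact tieKey_injective lam (congrArg (fun k => (ofLex k).2) hij)
  · exact absurd (key_lt_iff_posOf_lt.1 hij) h.not_gt

noncomputable def posEquiv (lam : Fin n → ℤ) : Fin n ≃ Fin n :=
  Equiv.ofBijective (fun i => ⟨posOf lam i, posOf_lt lam i⟩) <|
    Finite.injective_iff_bijective.1 fun _ _ h => posOf_injective lam (congrArg Fin.val h)

@[simp]
lemma posEquiv_val (lam : Fin n → ℤ) (i : Fin n) : (posEquiv lam i : ℕ) = posOf lam i := rfl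

lemma posEquiv_congr (h : posOf lam' = posOf lam) : posEquiv lam' = posEquiv lam :=
  Equiv.ext fun i => Fin.ext (congrFun h i)

@[simp]
lemma posOf_symm (lam : Fin n → ℤ) (m : Fin n) : posOf lam ((posEquiv lam).symm m) = m := by
  rw [← posEquiv_val, Equiv.apply_symm_apply]

lemma posOf_eq_of_adjacent
    (hadj : ∀ m m' : Fin n, (m : ℕ) + 1 = m' →
      key lam' ((posEquiv lam).symm m) < key lam' ((posEquiv lam).symm m')) :
    posOf lam' = posOf lam := by
  have hmono : StrictMono fun m => key lam' ((posEquiv lam).symm m) := by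
    cases n with
    | zero => exact fun m => m.elim0
    | succ n => exact Fin.strictMono_iff_lt_succ.2 fun m => hadj _ _ rfl
  have hiff (i j : Fin n) : key lam' i < key lam' j ↔ key lam i < key lam j := by
    rw [key_lt_iff_posOf_lt (lam := lam), ← posEquiv_val, ← posEquiv_val, ← Fin.lt_def,
      ← hmono.lt_iff_lt, Equiv.symm_apply_apply, Equiv.symm_apply_apply]
  funext i
  simp only [posOf_eq_card, hiff]

end Ordering

section Positions

variable {lam : Fin n → ℤ} {t : ℕ}

lemma filter_posOf_add_one (lam : Fin n → ℤ) (m : Fin n) :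
    univ.filter (fun i => posOf lam i + 1 = m + 1) = {(posEquiv lam).symm m} := by
  ext i
  simp [Equiv.eq_symm_apply, Fin.ext_iff]

lemma absAt_succ (lam : Fin n → ℤ) (m : Fin n) :
    absAt lam (m + 1) = |lam ((posEquiv lam).symm m)| := by
  rw [absAt, if_neg (by omega), filter_posOf_add_one, sum_singleton]

lemma sgAt_succ (lam : Fin n → ℤ) (m : Fin n) :
    sgAt lam (m + 1) = sgn lam ((posEquiv lam).symm m) := by
  rw [sgAt, if_neg (by omega), filter_posOf_add_one, sum_singleton]

lemma ixAt_succ (lam : Fin n → ℤ) (m : Fin n) :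
    ixAt lam (m + 1) = ((posEquiv lam).symm m : ℕ) + 1 := by
  rw [ixAt, if_neg (by omega), filter_posOf_add_one, sum_singleton]

lemma absAt_top (lam : Fin n → ℤ) : absAt lam (n + 1) = 0 := if_pos rfl

lemma sgAt_top (lam : Fin n → ℤ) : sgAt lam (n + 1) = 1 := if_pos rfl

lemma absAt_posOf_add_one (lam : Fin n → ℤ) (i : Fin n) :
    absAt lam (posOf lam i + 1) = |lam i| := by
  simpa using absAt_succ lam (posEquiv lam i)

lemma sgAt_posOf_add_one (lam : Fin n → ℤ) (i : Fin n) :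
    sgAt lam (posOf lam i + 1) = sgn lam i := by
  simpa using sgAt_succ lam (posEquiv lam i)

lemma sgAt_eq_one_or (lam : Fin n → ℤ) (h1 : 1 ≤ t) (h2 : t ≤ n + 1) :
    sgAt lam t = 1 ∨ sgAt lam t = -1 := by
  obtain rfl | ht := eq_or_ne t (n + 1)
  · exact .inl (sgAt_top lam)
  · obtain ⟨m, rfl⟩ : ∃ m : Fin n, t = m + 1 := ⟨⟨t - 1, by omega⟩, by simp; omega⟩
    rw [sgAt_succ, sgn]
    split_ifs <;> simp

lemma betaAt_of_adjacent {m m' : Fin n} (h : (m : ℕ) + 1 = m') :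
    betaAt lam (m + 1) = if tieKey lam ((posEquiv lam).symm m') < tieKey lam ((posEquiv lam).symm m)
      then 1 else 0 := by
  have hne : ((posEquiv lam).symm m : ℕ) ≠ (posEquiv lam).symm m' := fun e => by
    have := congrArg (posOf lam) (Fin.ext e)
    simp only [posOf_symm] at this
    omega
  have := ((posEquiv lam).symm m).isLt; have := ((posEquiv lam).symm m').isLt
  rw [betaAt, show (m : ℕ) + 1 + 1 = m' + 1 by omega, sgAt_succ, sgAt_succ, ixAt_succ, ixAt_succ]
  unfold sgn tieKey
  split_ifs <;> simp only [true_and, and_true, false_and, and_false, or_false, false_or, or_true,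
    not_true, not_false_eq_true] at * <;> omega

lemma sgAt_neg_le_betaAt_add (h1 : 1 ≤ t) (h2 : t ≤ n) :
    (if sgAt lam t = -1 then 1 else 0) ≤
      betaAt lam t + if sgAt lam (t + 1) = -1 then 1 else 0 := by
  rcases sgAt_eq_one_or lam (t := t + 1) (by omega) (by omega) with h | h <;>
    unfold betaAt <;> split_ifs <;> simp_all

lemma sgAt_neg_le_of_betaAt_le {A : ℕ → ℤ} (htop : A (n + 1) = 0)
    (hgap : ∀ t, 1 ≤ t → t ≤ n → betaAt lam t ≤ A t - A (t + 1))
    (h1 : 1 ≤ t) (h2 : t ≤ n + 1) :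
    (if sgAt lam t = -1 then 1 else 0) ≤ A t := by
  induction h2 using Nat.decreasingInduction with
  | self => simp [sgAt_top, htop]
  | of_succ t ht ih =>
    have := ih (by omega); have := hgap t h1 (by omega)
    have := sgAt_neg_le_betaAt_add (lam := lam) h1 (by omega)
    omega

end Positions

section Shift

/-- `d` read at the 1-based positions used by `absAt` and `pAt`, with `0` at the sentinel
position `n + 1`. -/
def posSeq (d : Fin n → ℤ) (t : ℕ) : ℤ := if h : t - 1 < n then d ⟨t - 1, h⟩ else 0

def IsPartition (e : Fin n → ℤ) : Prop := Antitone e ∧ 0 ≤ e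

noncomputable def shift (b : ℤ) (d lam : Fin n → ℤ) (i : Fin n) : ℤ :=
  lam i + sgn lam i * (b * d (posEquiv lam i))

variable {b : ℤ} {d e lam : Fin n → ℤ} {t : ℕ}

@[simp]
lemma posSeq_succ (d : Fin n → ℤ) (m : Fin n) : posSeq d (m + 1) = d m := by
  simp [posSeq]

lemma posSeq_top (d : Fin n → ℤ) : posSeq d (n + 1) = 0 := by
  simp [posSeq]

lemma posSeq_add (d e : Fin n → ℤ) (t : ℕ) : posSeq (d + e) t = posSeq d t + posSeq e t := by
  unfold posSeq
  split_ifs <;> simp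

lemma IsPartition.posSeq_succ_le (he : IsPartition e) (ht : 1 ≤ t) :
    posSeq e (t + 1) ≤ posSeq e t := by
  unfold posSeq
  split_ifs
  · exact he.1 (Fin.mk_le_mk.2 (by omega))
  · omega
  · exact he.2 _
  · rfl

lemma posSeq_quotOf (b : ℤ) (lam : Fin n → ℤ) (ht : 1 ≤ t) :
    posSeq (quotOf b lam) t = ∑ k ∈ Icc t n, pAt b lam k := by
  unfold posSeq quotOf
  split_ifs with h
  · simp only [show t - 1 + 1 = t by omega]
  · rw [Icc_eq_empty (by omega), sum_empty]

lemma pAt_eq_posSeq_sub (b : ℤ) (lam : Fin n → ℤ) (h1 : 1 ≤ t) (h2 : t ≤ n) :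
    pAt b lam t = posSeq (quotOf b lam) t - posSeq (quotOf b lam) (t + 1) := by
  rw [posSeq_quotOf b lam h1, posSeq_quotOf b lam (by omega), Icc_add_one_left_eq_Ioc,
    Icc_eq_cons_Ioc h2, sum_cons, add_sub_cancel_right]

lemma posSeq_posOf_add_one (d lam : Fin n → ℤ) (i : Fin n) :
    posSeq d (posOf lam i + 1) = d (posEquiv lam i) :=
  posSeq_succ d (posEquiv lam i)

lemma sgn_and_abs_of_eq_add {lam' : Fin n → ℤ} {i : Fin n} {a : ℤ}
    (h : lam' i = lam i + sgn lam i * a) (ha : (if sgn lam i = -1 then 1 else 0) ≤ |lam i| + a) :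
    sgn lam' i = sgn lam i ∧ |lam' i| = |lam i| + a := by
  unfold sgn at *
  rcases le_or_gt 0 (lam i) with hl | hl
  · simp only [hl, if_true, one_mul] at h ha ⊢
    rw [abs_of_nonneg hl] at ha ⊢
    rw [if_pos (by omega), abs_of_nonneg (by omega)]
    omega
  · simp only [hl.not_ge, if_false, if_true, neg_one_mul] at h ha ⊢
    rw [abs_of_neg hl] at ha ⊢
    rw [if_neg (by omega), abs_of_neg (by omega)]
    omega

lemma betaAt_le_shifted_gap (hb : 0 < b) (he : IsPartition (quotOf b lam + d)) (h1 : 1 ≤ t)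
    (h2 : t ≤ n) :
    betaAt lam t ≤
      (absAt lam t + b * posSeq d t) - (absAt lam (t + 1) + b * posSeq d (t + 1)) := by
  have hdrop := he.posSeq_succ_le h1
  rw [posSeq_add, posSeq_add] at hdrop
  have hfloor : b * pAt b lam t ≤ absAt lam t - absAt lam (t + 1) - betaAt lam t := by
    rw [pAt, Int.fdiv_eq_ediv_of_nonneg _ hb.le]
    exact Int.mul_ediv_self_le hb.ne'
  rw [pAt_eq_posSeq_sub b lam h1 h2] at hfloor
  linarith [mul_nonneg hb.le (sub_nonneg.2 hdrop)]

lemma sgn_shift_and_abs (hb : 0 < b) (he : IsPartition (quotOf b lam + d)) (i : Fin n) :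
    sgn (shift b d lam) i = sgn lam i ∧ |shift b d lam i| = |lam i| + b * d (posEquiv lam i) := by
  refine sgn_and_abs_of_eq_add rfl ?_
  have := sgAt_neg_le_of_betaAt_le (lam := lam) (A := fun t => absAt lam t + b * posSeq d t)
    (by simp [absAt_top, posSeq_top]) (fun t h1 h2 => betaAt_le_shifted_gap hb he h1 h2)
    (t := posOf lam i + 1) (by omega) (by have := posOf_lt lam i; omega)
  simpa only [absAt_posOf_add_one, sgAt_posOf_add_one, posSeq_posOf_add_one] using this

lemma sgn_shift (hb : 0 < b) (he : IsPartition (quotOf b lam + d)) :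
    sgn (shift b d lam) = sgn lam :=
  funext fun i => (sgn_shift_and_abs hb he i).1

lemma abs_shift (hb : 0 < b) (he : IsPartition (quotOf b lam + d)) (i : Fin n) :
    |shift b d lam i| = |lam i| + b * d (posEquiv lam i) :=
  (sgn_shift_and_abs hb he i).2

lemma key_lt_of_betaAt_le {lam' : Fin n → ℤ} (hsgn : sgn lam' = sgn lam) {m m' : Fin n}
    (h : (m : ℕ) + 1 = m')
    (hgap : betaAt lam (m + 1) ≤
      |lam' ((posEquiv lam).symm m)| - |lam' ((posEquiv lam).symm m')|) :
    key lam' ((posEquiv lam).symm m) < key lam' ((posEquiv lam).symm m') := by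
  have hne : tieKey lam ((posEquiv lam).symm m) ≠ tieKey lam ((posEquiv lam).symm m') :=
    (tieKey_injective lam).ne ((posEquiv lam).symm.injective.ne (Fin.ne_of_val_ne (by omega)))
  rw [betaAt_of_adjacent h] at hgap
  rw [key_lt_iff, tieKey_congr (congrFun hsgn _), tieKey_congr (congrFun hsgn _)]
  split_ifs at hgap <;> omega

lemma posOf_shift (hb : 0 < b) (he : IsPartition (quotOf b lam + d)) :
    posOf (shift b d lam) = posOf lam :=
  posOf_eq_of_adjacent fun m m' h => key_lt_of_betaAt_le (sgn_shift hb he) h <| by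
    have := betaAt_le_shifted_gap hb he (t := m + 1) (by omega) (by omega)
    rw [abs_shift hb he, abs_shift hb he, Equiv.apply_symm_apply, Equiv.apply_symm_apply,
      ← absAt_succ, ← absAt_succ, ← posSeq_succ d m, ← posSeq_succ d m', ← h]
    linarith

lemma absAt_shift (hb : 0 < b) (he : IsPartition (quotOf b lam + d)) (h1 : 1 ≤ t)
    (h2 : t ≤ n + 1) : absAt (shift b d lam) t = absAt lam t + b * posSeq d t := by
  obtain rfl | ht := eq_or_ne t (n + 1)
  · simp [absAt_top, posSeq_top]
  · obtain ⟨m, rfl⟩ : ∃ m : Fin n, t = m + 1 := ⟨⟨t - 1, by omega⟩, by simp; omega⟩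
    rw [absAt_succ, posEquiv_congr (posOf_shift hb he), abs_shift hb he, Equiv.apply_symm_apply,
      absAt_succ, posSeq_succ]

lemma betaAt_congr {lam' : Fin n → ℤ} (hpos : posOf lam' = posOf lam)
    (hsgn : sgn lam' = sgn lam) :
    betaAt lam' = betaAt lam := by
  unfold betaAt sgAt ixAt
  rw [hpos, hsgn]

lemma pAt_shift (hb : 0 < b) (he : IsPartition (quotOf b lam + d)) (h1 : 1 ≤ t) (h2 : t ≤ n) :
    pAt b (shift b d lam) t =
      posSeq (quotOf b lam + d) t - posSeq (quotOf b lam + d) (t + 1) := by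
  have hsplit : absAt lam t + b * posSeq d t - (absAt lam (t + 1) + b * posSeq d (t + 1))
      - betaAt lam t
      = (absAt lam t - absAt lam (t + 1) - betaAt lam t) + b * (posSeq d t - posSeq d (t + 1)) := by
    ring
  rw [pAt, absAt_shift hb he h1 (by omega), absAt_shift hb he (by omega) (by omega),
    betaAt_congr (posOf_shift hb he) (sgn_shift hb he), hsplit, Int.fdiv_eq_ediv_of_nonneg _ hb.le,
    Int.add_mul_ediv_left _ _ hb.ne', ← Int.fdiv_eq_ediv_of_nonneg _ hb.le, ← pAt,
    pAt_eq_posSeq_sub b lam h1 h2, posSeq_add, posSeq_add]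
  ring

lemma quotOf_shift (hb : 0 < b) (he : IsPartition (quotOf b lam + d)) :
    quotOf b (shift b d lam) = quotOf b lam + d := by
  funext j
  have hj := j.isLt
  set E := posSeq (quotOf b lam + d)
  calc quotOf b (shift b d lam) j = ∑ t ∈ Icc ((j : ℕ) + 1) n, -(E (t + 1) - E t) :=
        sum_congr rfl fun t ht => by
          rw [mem_Icc] at ht
          rw [pAt_shift hb he (by omega) ht.2, neg_sub]
    _ = E (j + 1) - E (n + 1) := by rw [sum_neg_distrib, sum_Icc_sub (by omega), neg_sub]
    _ = (quotOf b lam + d) j := by simp only [E, posSeq_succ, posSeq_top, sub_zero]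

lemma shift_zero (b : ℤ) (lam : Fin n → ℤ) : shift b 0 lam = lam := by
  funext i
  simp [shift]

lemma shift_shift {d' : Fin n → ℤ} (hpos : posOf (shift b d lam) = posOf lam)
    (hsgn : sgn (shift b d lam) = sgn lam) :
    shift b d' (shift b d lam) = shift b (d + d') lam := by
  funext i
  rw [shift, hsgn, posEquiv_congr hpos, shift, shift, Pi.add_apply]
  ring

end Shift

lemma isPartition_add_neg (e : Fin n → ℤ) : IsPartition (e + -e) := by
  rw [add_neg_cancel]
  exact ⟨antitone_const, le_rfl⟩

lemma Tmap_eq_shift (r : ℤ) (lam : Fin n → ℤ) :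
    Tmap r lam = shift (r - 1) (-quotOf (r - 1) lam) lam := by
  funext i
  rw [Tmap, shift, Pi.neg_apply]
  change _ = lam i + sgn lam i * ((r - 1) * -∑ m ∈ Icc (posOf lam i + 1) n, pAt (r - 1) lam m)
  ring

theorem stmt19_general (n : ℕ) (r : ℤ) (hr : 1 ≤ r - 1)
    (mu : Fin n → ℤ) (hmu1 : ∀ i j : Fin n, i ≤ j → mu j ≤ mu i) (hmu2 : ∀ i, 0 ≤ mu i) :
    (∀ lam : Fin n → ℤ, quotOf (r - 1) lam = mu →
      (∀ i, rho (Tmap r lam) i = rho lam i) ∧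
      (∀ i, sgn (Tmap r lam) i = sgn lam i) ∧
      (∀ i, (r - 1) ∣ (Tmap r lam i - lam i)) ∧
      quotOf (r - 1) (Tmap r lam) = (fun _ => 0)) ∧
    Set.BijOn (Tmap r)
      {lam : Fin n → ℤ | quotOf (r - 1) lam = mu}
      {lam : Fin n → ℤ | quotOf (r - 1) lam = fun _ => 0} := by
  have hb : 0 < r - 1 := by omega
  have hT (lam : Fin n → ℤ) := isPartition_add_neg (quotOf (r - 1) lam)
  have hquot (lam : Fin n → ℤ) : quotOf (r - 1) (Tmap r lam) = fun _ => 0 := by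
    rw [Tmap_eq_shift, quotOf_shift hb (hT lam), add_neg_cancel]
    rfl
  have hfiber {nu : Fin n → ℤ} (hnu : quotOf (r - 1) nu = fun _ => 0) :
      quotOf (r - 1) nu + mu = mu := by
    rw [hnu]
    exact zero_add mu
  have hU {nu : Fin n → ℤ} (hnu : quotOf (r - 1) nu = fun _ => 0) :
      IsPartition (quotOf (r - 1) nu + mu) :=
    (hfiber hnu).symm ▸ ⟨hmu1, hmu2⟩
  refine ⟨fun lam _ => ⟨fun i => ?_, fun i => ?_, fun i => ?_, hquot lam⟩,
    Set.InvOn.bijOn (f' := shift (r - 1) mu) ⟨fun lam (hlam : quotOf (r - 1) lam = mu) => ?_,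
      fun nu (hnu : quotOf (r - 1) nu = fun _ => 0) => ?_⟩
      (fun lam _ => hquot lam) fun nu hnu => (quotOf_shift hb (hU hnu)).trans (hfiber hnu)⟩
  · rw [Tmap_eq_shift, rho, rho, sgn_shift hb (hT lam), posOf_shift hb (hT lam)]
  · rw [Tmap_eq_shift, sgn_shift hb (hT lam)]
  · exact ⟨-(sgn lam i * quotOf (r - 1) lam (posEquiv lam i)), by
      rw [Tmap_eq_shift, shift, Pi.neg_apply]; ring⟩
  · rw [Tmap_eq_shift, shift_shift (posOf_shift hb (hT lam)) (sgn_shift hb (hT lam)), hlam,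
      neg_add_cancel, shift_zero]
  · rw [Tmap_eq_shift, shift_shift (posOf_shift hb (hU hnu)) (sgn_shift hb (hU hnu)),
      quotOf_shift hb (hU hnu), hfiber hnu, add_neg_cancel, shift_zero]

/-- the map λ ↦ λ' preserves ρ, σ and residues mod r−1, sends the
(r−1)-quotient to (0,…,0), and is a bijection from ℤ^n_μ onto ℤ^n_{(0,…,0)}. -/
theorem stmt19 (n : ℕ) (hn : 2 ≤ n) (r : ℤ) (hr : 1 ≤ r - 1)
    (mu : Fin n → ℤ) (hmu1 : ∀ i j : Fin n, i ≤ j → mu j ≤ mu i) (hmu2 : ∀ i, 0 ≤ mu i) :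
    (∀ lam : Fin n → ℤ, quotOf (r - 1) lam = mu →
      (∀ i, rho (Tmap r lam) i = rho lam i) ∧
      (∀ i, sgn (Tmap r lam) i = sgn lam i) ∧
      (∀ i, (r - 1) ∣ (Tmap r lam i - lam i)) ∧
      quotOf (r - 1) (Tmap r lam) = (fun _ => 0)) ∧
    Set.BijOn (Tmap r)
      {lam : Fin n → ℤ | quotOf (r - 1) lam = mu}
      {lam : Fin n → ℤ | quotOf (r - 1) lam = fun _ => 0} :=
  stmt19_general n r hr mu hmu1 hmu2

end CCnDAHA
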